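/- arXiv:2508.05854 — 2 statements merged into one kernel-verified Lean document; each statement's English description precedes it below -/
import Mathlib

section
/- The scaled partition matrix satisfies P†·P = I (the identity matrix indexed by J_k), and consequently A†(I) = I, i.e., the adjoint map A† sends the identity matrix indexed by (Fin d_a) × (Fin d) to the identity matrix indexed by (Fin d_a) × J_k. -/
open Matrix
open scoped Kronecker ComplexOrder

noncomputable section

instance monoDecidable {k d : ℕ} : DecidablePred (Monotone : (Fin k → Fin d) → Prop) :=
  fun f => decidable_of_iff (∀ a b : Fin k, a ≤ b → f a ≤ f b) Iff.rfl

/-- `Jk d k` : nondecreasing sequences of length `k` from `{0, …, d-1}`. -/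
abbrev Jk (d k : ℕ) := {f : Fin k → Fin d // Monotone f}

/-- the nondecreasing rearrangement of a sequence. -/
def sortTuple {d k : ℕ} (i : Fin k → Fin d) : Jk d k :=
  ⟨i ∘ Tuple.sort i, Tuple.monotone_sort i⟩

/-- `permCount j` : the number of sequences whose sorted rearrangement is `j`. -/
def permCount {d k : ℕ} (j : Jk d k) : ℕ :=
  (Finset.univ.filter fun i : Fin k → Fin d => sortTuple i = j).card

/-- The scaled partition matrix `P`. -/
def Pmat (d k : ℕ) : Matrix (Fin k → Fin d) (Jk d k) ℂ :=
  fun i j => if sortTuple i = j then (((permCount j : ℝ) ^ (-(1/2) : ℝ) : ℝ) : ℂ) else 0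

/-- `cons0 b r` is the sequence `b⌢r` sending `0` to `b` and `s+1` to `r s`. -/
def cons0 {d k : ℕ} (b : Fin d) (r : Fin (k - 1) → Fin d) : Fin k → Fin d :=
  fun s => if h : (s : ℕ) = 0 then b else r ⟨(s : ℕ) - 1, by have := s.isLt; omega⟩

/-- Partial trace over the last `k - 1` factors. -/
def PTr (da d k : ℕ)
    (M : Matrix (Fin da × (Fin k → Fin d)) (Fin da × (Fin k → Fin d)) ℂ) :
    Matrix (Fin da × Fin d) (Fin da × Fin d) ℂ :=
  fun p q => ∑ r : Fin (k - 1) → Fin d, M (p.1, cons0 p.2 r) (q.1, cons0 q.2 r)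

/-- The operator `A`. -/
def Amap (da d k : ℕ) (X : Matrix (Fin da × Jk d k) (Fin da × Jk d k) ℂ) :
    Matrix (Fin da × Fin d) (Fin da × Fin d) ℂ :=
  PTr da d k (((1 : Matrix (Fin da) (Fin da) ℂ) ⊗ₖ Pmat d k) * X *
    ((1 : Matrix (Fin da) (Fin da) ℂ) ⊗ₖ Pmat d k)ᴴ)

/-- The extension operator `E` : `E(W) ((a,i),(a',i')) = W ((a, i 0), (a', i' 0))` when
`i` and `i'` agree on all later coordinates, and `0` otherwise. -/
def Emat (da d k : ℕ) (hk : 0 < k)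
    (W : Matrix (Fin da × Fin d) (Fin da × Fin d) ℂ) :
    Matrix (Fin da × (Fin k → Fin d)) (Fin da × (Fin k → Fin d)) ℂ :=
  fun p q =>
    if ∀ s : Fin (k - 1),
        p.2 ⟨(s : ℕ) + 1, by have := s.isLt; omega⟩ =
          q.2 ⟨(s : ℕ) + 1, by have := s.isLt; omega⟩
    then W (p.1, p.2 ⟨0, hk⟩) (q.1, q.2 ⟨0, hk⟩) else 0

/-- The adjoint operator `A†`. -/
def Adag (da d k : ℕ) (hk : 0 < k)
    (W : Matrix (Fin da × Fin d) (Fin da × Fin d) ℂ) :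
    Matrix (Fin da × Jk d k) (Fin da × Jk d k) ℂ :=
  ((1 : Matrix (Fin da) (Fin da) ℂ) ⊗ₖ Pmat d k)ᴴ * Emat da d k hk W *
    ((1 : Matrix (Fin da) (Fin da) ℂ) ⊗ₖ Pmat d k)

/-- Partial transpose in the second index. -/
def pTransp {m α : Type*} (M : Matrix (m × α) (m × α) ℂ) : Matrix (m × α) (m × α) ℂ :=
  fun p q => M (p.1, q.2) (q.1, p.2)

/-- Squared Frobenius norm. -/
def frobSq {α β : Type*} [Fintype α] [Fintype β] (M : Matrix α β ℂ) : ℝ :=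
  ∑ p, ∑ q, ‖M p q‖ ^ 2

/-- Largest eigenvalue of a Hermitian matrix. -/
def lamMax {n : Type*} [Fintype n] [DecidableEq n]
    {M : Matrix n n ℂ} (hM : M.IsHermitian) : ℝ :=
  ⨆ i, hM.eigenvalues i

end

/-!
Distinct columns of `P` are supported on distinct fibres of `sortTuple`, and the column of `j`
has `permCount j` entries equal to `permCount j ^ (-1/2)`, so `Pᴴ P = 1`. Two sequences agreeing
in their first and in all later coordinates are equal, so `E(1) = 1`, and then
`A†(1) = (1 ⊗ P)ᴴ (1 ⊗ P) = 1 ⊗ Pᴴ P = 1`.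
-/

lemma sortTuple_self {d k : ℕ} (j : Jk d k) : sortTuple j.1 = j :=
  Subtype.ext <| by
    simp only [sortTuple, (Tuple.sort_eq_refl_iff_monotone).mpr j.2, Equiv.coe_refl,
      Function.comp_id]

lemma permCount_pos {d k : ℕ} (j : Jk d k) : 0 < permCount j :=
  Finset.card_pos.mpr ⟨j.1, by simp [sortTuple_self]⟩

lemma conjTranspose_mul_self_eq_one_of_fiber_weights {ι κ : Type*} [Fintype ι] [DecidableEq κ]
    (f : ι → κ) (c : κ → ℝ)
    (hc : ∀ j, c j ^ 2 * (Finset.univ.filter (f · = j)).card = 1) :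
    (of fun i j => if f i = j then (c j : ℂ) else 0)ᴴ *
      (of fun i j => if f i = j then (c j : ℂ) else 0) = 1 := by
  ext j j'
  have hentry : ∀ i,
      star (if f i = j then (c j : ℂ) else 0) * (if f i = j' then (c j' : ℂ) else 0) =
        if j = j' then (if f i = j then ((c j ^ 2 : ℝ) : ℂ) else 0) else 0 := by
    intro i
    by_cases hj : f i = j <;> by_cases hj' : f i = j'
    · subst hj hj'; simp [sq]
    · simp [hj', show j ≠ j' by rintro rfl; exact hj' hj]
    · simp [hj]
    · simp [hj]
  simp only [mul_apply, conjTranspose_apply, of_apply, hentry, one_apply]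
  split_ifs with h
  · subst h
    rw [← Finset.sum_filter, Finset.sum_const, nsmul_eq_mul]
    exact_mod_cast (mul_comm _ _).trans (hc j)
  · exact Finset.sum_const_zero

lemma funext_iff_zero_and_succ {α : Type*} {k : ℕ} (hk : 0 < k) {i i' : Fin k → α} :
    i = i' ↔ i ⟨0, hk⟩ = i' ⟨0, hk⟩ ∧
      ∀ s : Fin (k - 1), i ⟨s + 1, by omega⟩ = i' ⟨s + 1, by omega⟩ := by
  refine ⟨fun h => h ▸ ⟨rfl, fun _ => rfl⟩, fun ⟨h0, hs⟩ => funext fun s => ?_⟩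
  obtain ⟨_ | n, hn⟩ := s
  · exact h0
  · exact hs ⟨n, by omega⟩

lemma Emat_one (da d k : ℕ) (hk : 0 < k) :
    Emat da d k hk (1 : Matrix (Fin da × Fin d) (Fin da × Fin d) ℂ) = 1 := by
  ext ⟨a, i⟩ ⟨a', i'⟩
  simp only [Emat, one_apply, Prod.mk.injEq, funext_iff_zero_and_succ hk (i := i)]
  split_ifs <;> tauto

lemma Pmat_conjTranspose_mul_self (d k : ℕ) : (Pmat d k)ᴴ * Pmat d k = 1 :=
  conjTranspose_mul_self_eq_one_of_fiber_weights sortTuple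
    (fun j => (permCount j : ℝ) ^ (-(1 / 2) : ℝ)) fun j => by
      have hn : (0 : ℝ) < permCount j := mod_cast permCount_pos j
      rw [← Real.rpow_natCast, ← Real.rpow_mul hn.le]
      norm_num [Real.rpow_neg_one]
      exact inv_mul_cancel₀ hn.ne'

theorem stmt6_general (da d k : ℕ) (hk : 0 < k) :
    (Pmat d k)ᴴ * Pmat d k = 1 ∧
    Adag da d k hk (1 : Matrix (Fin da × Fin d) (Fin da × Fin d) ℂ) = 1 := by
  refine ⟨Pmat_conjTranspose_mul_self d k, ?_⟩
  rw [Adag, Emat_one, Matrix.mul_one, conjTranspose_kronecker, conjTranspose_one,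
    ← mul_kronecker_mul, one_mul, Pmat_conjTranspose_mul_self, one_kronecker_one]

theorem stmt6 (da d k : ℕ) (hda : 0 < da) (hd : 0 < d) (hk : 0 < k) :
    (Pmat d k)ᴴ * Pmat d k = 1 ∧
    Adag da d k hk (1 : Matrix (Fin da × Fin d) (Fin da × Fin d) ℂ) = 1 :=
  stmt6_general da d k hk
end

section
/- Let ρ be a PSD matrix indexed by (Fin d_a) × (Fin d) with trace 1. Then for all matrices X, Y indexed by (Fin d_a) × J_k that are PSD with trace 1, every Hermitian matrix u indexed by (Fin d_a) × (Fin d), and every Hermitian matrix z indexed by (Fin d_a) × J_k, one has (1/2)·‖A(X) − ρ‖² + (1/2)·‖T(X) − Y‖² + (1/2)·‖u‖² + (1/2)·‖z‖² + Re(Tr(ρ·u)) + λmax(−A†(u) − T(z)) + λmax(z) ≥ 0 (weak duality / nonnegativity of the duality gap for the PST least-squares primal-dual pair). -/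
open Matrix
open scoped Kronecker ComplexOrder

noncomputable section

/-!
The duality gap is the sum of four nonnegative terms:
`½‖A(X) - ρ - u‖² + ½‖T(X) - Y - z‖² + (λmax(H) - Re Tr(X H)) + (λmax(z) - Re Tr(Y z))`
with `H = -A†(u) - T(z)`. Expanding the squares, the cross terms cancel because `A†` is the
adjoint of `A` for the trace pairing (`E` is the adjoint of the partial trace) and the partial
transpose is self-adjoint for it. The last two terms are nonnegative since `Re Tr(X H) ≤ λmax(H)`
for any density matrix `X`, as seen in an eigenbasis of `H`.
-/

lemma frobSq_nonneg {α β : Type*} [Fintype α] [Fintype β] (M : Matrix α β ℂ) :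
    0 ≤ frobSq M :=
  Finset.sum_nonneg fun _ _ => Finset.sum_nonneg fun _ _ => sq_nonneg _

lemma frobSq_sub_of_isHermitian {α : Type*} [Fintype α] (M : Matrix α α ℂ)
    {N : Matrix α α ℂ} (hN : N.IsHermitian) :
    frobSq (M - N) = frobSq M + frobSq N - 2 * (M * N).trace.re := by
  have entry : ∀ p q, ‖(M - N) p q‖ ^ 2 =
      ‖M p q‖ ^ 2 + ‖N p q‖ ^ 2 - 2 * (M p q * N q p).re := by
    intro p q
    rw [← hN.apply q p, Matrix.sub_apply, Complex.sq_norm, Complex.sq_norm, Complex.sq_norm]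
    simp only [Complex.normSq_apply, Complex.mul_re, Complex.sub_re, Complex.sub_im,
      Complex.star_def, Complex.conj_re, Complex.conj_im]
    ring
  simp only [frobSq, entry, Finset.sum_sub_distrib, Finset.sum_add_distrib, ← Finset.mul_sum,
    trace, diag, mul_apply, Complex.re_sum]

lemma trace_pTransp_mul {m α : Type*} [Fintype m] [Fintype α]
    (X Z : Matrix (m × α) (m × α) ℂ) :
    (pTransp X * Z).trace = (X * pTransp Z).trace := by
  simp only [trace, diag, mul_apply, pTransp]
  rw [← Finset.sum_product', ← Finset.sum_product']
  let swap : (m × α) × (m × α) ≃ (m × α) × (m × α) :=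
    Function.Involutive.toPerm (fun x => ((x.1.1, x.2.2), (x.2.1, x.1.2))) fun _ => rfl
  exact Fintype.sum_equiv swap _ _ fun _ => rfl

section PartialTrace

variable {d k : ℕ}

lemma cons0_zero (hk : 0 < k) (b : Fin d) (r : Fin (k - 1) → Fin d) :
    cons0 b r ⟨0, hk⟩ = b := by
  simp [cons0]

lemma cons0_succ (b : Fin d) (r : Fin (k - 1) → Fin d) (s : Fin (k - 1))
    (h : (s : ℕ) + 1 < k) : cons0 b r ⟨(s : ℕ) + 1, h⟩ = r s := by
  simp [cons0]

def consEquiv (hk : 0 < k) : Fin d × (Fin (k - 1) → Fin d) ≃ (Fin k → Fin d) where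
  toFun p := cons0 p.1 p.2
  invFun i := (i ⟨0, hk⟩, fun s => i ⟨(s : ℕ) + 1, by omega⟩)
  left_inv p := Prod.ext (cons0_zero hk p.1 p.2) (funext fun s => cons0_succ p.1 p.2 s (by omega))
  right_inv i := by
    funext s
    by_cases h : (s : ℕ) = 0
    · simp only [cons0, dif_pos h]
      exact congrArg i (Fin.ext h.symm)
    · simp only [cons0, dif_neg h]
      exact congrArg i (Fin.ext (by simp only; omega))

lemma Emat_cons0 (da : ℕ) (hk : 0 < k) (W : Matrix (Fin da × Fin d) (Fin da × Fin d) ℂ)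
    (a a' : Fin da) (b b' : Fin d) (r r' : Fin (k - 1) → Fin d) :
    Emat da d k hk W (a, cons0 b r) (a', cons0 b' r') =
      if r = r' then W (a, b) (a', b') else 0 := by
  simp only [Emat, cons0_succ, cons0_zero, ← funext_iff]

lemma trace_PTr_mul (da : ℕ) (hk : 0 < k)
    (M : Matrix (Fin da × (Fin k → Fin d)) (Fin da × (Fin k → Fin d)) ℂ)
    (W : Matrix (Fin da × Fin d) (Fin da × Fin d) ℂ) :
    (PTr da d k M * W).trace = (M * Emat da d k hk W).trace := by
  let e : (Fin da × Fin d) × (Fin (k - 1) → Fin d) ≃ Fin da × (Fin k → Fin d) :=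
    (Equiv.prodAssoc _ _ _).trans ((Equiv.refl _).prodCongr (consEquiv hk))
  have he : ∀ x, e x = (x.1.1, cons0 x.1.2 x.2) := fun _ => by rfl
  simp only [trace, diag, mul_apply, PTr, Finset.sum_mul]
  simp only [← e.sum_comp, he, Emat_cons0, Fintype.sum_prod_type, mul_ite, mul_zero,
    Finset.sum_ite_eq', Finset.mem_univ, if_true]
  simp_rw [Finset.sum_comm (γ := Fin (k - 1) → Fin d)]

end PartialTrace

lemma trace_Amap_mul (da d k : ℕ) (hk : 0 < k)
    (X : Matrix (Fin da × Jk d k) (Fin da × Jk d k) ℂ)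
    (W : Matrix (Fin da × Fin d) (Fin da × Fin d) ℂ) :
    (Amap da d k X * W).trace = (X * Adag da d k hk W).trace := by
  rw [Amap, Adag, trace_PTr_mul da hk, Matrix.mul_assoc (_ * X), trace_mul_cycle,
    trace_mul_comm, ← Matrix.mul_assoc, ← Matrix.mul_assoc]

section LamMax

variable {n : Type*} [Fintype n] [DecidableEq n] {H : Matrix n n ℂ}

lemma eigenvalues_le_lamMax (hH : H.IsHermitian) (i : n) : hH.eigenvalues i ≤ lamMax hH :=
  le_ciSup (Set.finite_range _).bddAbove i

lemma trace_mul_eq_sum_diag_mul_eigenvalues (X : Matrix n n ℂ) (hH : H.IsHermitian) :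
    (X * H).trace =
      ∑ i, ((hH.eigenvectorUnitary : Matrix n n ℂ)ᴴ * X * hH.eigenvectorUnitary) i i *
        hH.eigenvalues i := by
  conv_lhs => rw [hH.spectral_theorem, Unitary.conjStarAlgAut_apply]
  rw [← Matrix.mul_assoc, trace_mul_comm]
  simp [← Matrix.mul_assoc, trace, mul_diagonal, star_eq_conjTranspose]

lemma re_trace_mul_le_lamMax {X : Matrix n n ℂ} (hX : X.PosSemidef) (hXtr : X.trace = 1)
    (hH : H.IsHermitian) : (X * H).trace.re ≤ lamMax hH := by
  set U : Matrix n n ℂ := (hH.eigenvectorUnitary : Matrix n n ℂ)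
  set P := Uᴴ * X * U
  have hP : P.PosSemidef := hX.conjTranspose_mul_mul_same U
  have hPtr : ∑ i, (P i i).re = 1 := by
    rw [← Complex.re_sum]
    change P.trace.re = 1
    rw [trace_mul_cycle, ← star_eq_conjTranspose,
      mem_unitaryGroup_iff.mp hH.eigenvectorUnitary.2, Matrix.one_mul, hXtr, Complex.one_re]
  calc (X * H).trace.re = ∑ i, (P i i).re * hH.eigenvalues i := by
        simp only [trace_mul_eq_sum_diag_mul_eigenvalues X hH, Complex.re_sum,
          Complex.re_mul_ofReal]
        rfl
    _ ≤ ∑ i, (P i i).re * lamMax hH := Finset.sum_le_sum fun i _ =>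
        mul_le_mul_of_nonneg_left (eigenvalues_le_lamMax hH i)
          (Complex.nonneg_iff.mp hP.diag_nonneg).1
    _ = lamMax hH := by rw [← Finset.sum_mul, hPtr, one_mul]

end LamMax

theorem stmt13_general (da d k : ℕ) (hk : 0 < k)
    (ρ : Matrix (Fin da × Fin d) (Fin da × Fin d) ℂ)
    (X Y : Matrix (Fin da × Jk d k) (Fin da × Jk d k) ℂ)
    (hX : X.PosSemidef) (hXtr : X.trace = 1)
    (hY : Y.PosSemidef) (hYtr : Y.trace = 1)
    (u : Matrix (Fin da × Fin d) (Fin da × Fin d) ℂ) (hu : u.IsHermitian)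
    (z : Matrix (Fin da × Jk d k) (Fin da × Jk d k) ℂ) (hz : z.IsHermitian)
    (h1 : (-(Adag da d k hk u) - pTransp z).IsHermitian) :
    0 ≤ (1 / 2) * frobSq (Amap da d k X - ρ) + (1 / 2) * frobSq (pTransp X - Y) +
          (1 / 2) * frobSq u + (1 / 2) * frobSq z +
          ((ρ * u).trace).re + lamMax h1 + lamMax hz := by
  have gap_u := frobSq_sub_of_isHermitian (Amap da d k X - ρ) hu
  have gap_z := frobSq_sub_of_isHermitian (pTransp X - Y) hz
  rw [Matrix.sub_mul, trace_sub, Complex.sub_re, trace_Amap_mul da d k hk] at gap_u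
  rw [Matrix.sub_mul, trace_sub, Complex.sub_re, trace_pTransp_mul] at gap_z
  have slack_X := re_trace_mul_le_lamMax hX hXtr h1
  rw [Matrix.mul_sub, Matrix.mul_neg, trace_sub, trace_neg, Complex.sub_re, Complex.neg_re]
    at slack_X
  have slack_Y := re_trace_mul_le_lamMax hY hYtr hz
  linarith [frobSq_nonneg (Amap da d k X - ρ - u), frobSq_nonneg (pTransp X - Y - z)]

theorem stmt13 (da d k : ℕ) (hda : 0 < da) (hd : 0 < d) (hk : 0 < k)
    (ρ : Matrix (Fin da × Fin d) (Fin da × Fin d) ℂ)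
    (hρ : ρ.PosSemidef) (hρtr : ρ.trace = 1)
    (X Y : Matrix (Fin da × Jk d k) (Fin da × Jk d k) ℂ)
    (hX : X.PosSemidef) (hXtr : X.trace = 1)
    (hY : Y.PosSemidef) (hYtr : Y.trace = 1)
    (u : Matrix (Fin da × Fin d) (Fin da × Fin d) ℂ) (hu : u.IsHermitian)
    (z : Matrix (Fin da × Jk d k) (Fin da × Jk d k) ℂ) (hz : z.IsHermitian)
    (h1 : (-(Adag da d k hk u) - pTransp z).IsHermitian) :
    0 ≤ (1 / 2) * frobSq (Amap da d k X - ρ) + (1 / 2) * frobSq (pTransp X - Y) +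
          (1 / 2) * frobSq u + (1 / 2) * frobSq z +
          ((ρ * u).trace).re + lamMax h1 + lamMax hz :=
  stmt13_general da d k hk ρ X Y hX hXtr hY hYtr u hu z hz h1
end
end
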